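/- Fix 1 ≤ i ≤ N−1 and 1 ≤ j ≤ T and regard d_{i,j} as a function of the time-t_j variables H_i(t_j), H_{i+1}(t_j), Q_i(t_j), with the time-t_{j−1} values held fixed and satisfying H_i(t_{j−1}) + H_{i+1}(t_{j−1}) > 2H_b. Then: (1) ∂d_{i,j}/∂H_{i+1}(t_j) = (g/Δx)(θ w (H_{i+1}(t_j) − H_b) + (1−θ)Ā); (2) ∂d_{i,j}/∂H_i(t_j) = −(g/Δx)(θ w (H_i(t_j) − H_b) + (1−θ)Ā); (3) ∂d_{i,j}/∂Q_i(t_j) = 1/Δt + (g/C²)(θ P_{i+1/2}(t_{j−1})(Q_i(t_j)² + ⟨Q_i(t_j)⟩²)/(A_{i+1/2}(t_{j−1})² ⟨Q_i(t_j)⟩) + (1−θ) P̄⟨Q̄⟩/Ā²), and this quantity is strictly positive; (4) if moreover H_{i+1}(t_j) > H_b, then ∂d_{i,j}/∂H_{i+1}(t_j) > 0. -/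

import Mathlib

/-- Smooth absolute value `⟨x⟩ = √(x² + ε)`. -/
noncomputable def sabs (ε x : ℝ) : ℝ := Real.sqrt (x ^ 2 + ε)

/-- The momentum residual `d_{i,j}` regarded as a function of the time-`t_j` variables
`H_i(t_j) = Hi`, `H_{i+1}(t_j) = Hip1`, `Q_i(t_j) = Qi`, with the time-`t_{j-1}` values
`Hiprev = H_i(t_{j-1})`, `Hip1prev = H_{i+1}(t_{j-1})`, `Qiprev = Q_i(t_{j-1})` held fixed.
Here `A_{i+1/2} = (w/2)(H_i + H_{i+1} - 2 H_b)` and `P_{i+1/2} = w + H_i + H_{i+1} - 2 H_b`. -/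
noncomputable def momResLocal (g w Hb Δx Δt C ε Abar Pbar Qbar θ : ℝ)
    (Hiprev Hip1prev Qiprev : ℝ) (Hi Hip1 Qi : ℝ) : ℝ :=
  (Qi - Qiprev) / Δt
    + g * (θ * (w / 2 * (Hi + Hip1 - 2 * Hb)) + (1 - θ) * Abar) * (Hip1 - Hi) / Δx
    + g * (θ * (w + Hiprev + Hip1prev - 2 * Hb) * sabs ε Qi
            / (w / 2 * (Hiprev + Hip1prev - 2 * Hb)) ^ 2
          + (1 - θ) * Pbar * sabs ε Qbar / Abar ^ 2) * Qi / C ^ 2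

lemma sabs_pos {ε : ℝ} (hε : 0 < ε) (x : ℝ) : 0 < sabs ε x :=
  Real.sqrt_pos.2 (by positivity)

lemma sabs_nonneg (ε x : ℝ) : 0 ≤ sabs ε x :=
  Real.sqrt_nonneg _

lemma hasDerivAt_sabs {ε : ℝ} (hε : 0 < ε) (x : ℝ) :
    HasDerivAt (sabs ε) (x / sabs ε x) x := by
  have hsq : HasDerivAt (fun y : ℝ => y ^ 2 + ε) (2 * x) x := by
    simpa using (hasDerivAt_pow 2 x).add_const ε
  refine ((Real.hasDerivAt_sqrt (by positivity)).comp x hsq).congr_deriv ?_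
  unfold sabs
  field_simp

lemma hasDerivAt_sabs_friction {ε : ℝ} (hε : 0 < ε) (a b c x : ℝ) :
    HasDerivAt (fun q => (a * sabs ε q / b + c) * q)
      (a * (x ^ 2 + sabs ε x ^ 2) / (b * sabs ε x) + c) x := by
  have hs := (sabs_pos hε x).ne'
  refine ((((hasDerivAt_sabs hε x).const_mul a).div_const b).add_const c
    |>.mul (hasDerivAt_id' x)).congr_deriv ?_
  rcases eq_or_ne b 0 with rfl | hb
  · simp
  · field_simp
    ring

/-- Since `A_{i+1/2}` is the mean of `w (H - H_b)` over the two nodes, the trapezoidal rule is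
exact and the discrete pressure term `g A_{i+1/2} (H_{i+1} - H_i) / Δx` is the increment of this
primitive between `H_i` and `H_{i+1}`. -/
noncomputable def pressurePrimitive (g w Hb Δx Abar θ h : ℝ) : ℝ :=
  g / Δx * (θ * (w / 2) * (h - Hb) ^ 2 + (1 - θ) * Abar * h)

lemma hasDerivAt_pressurePrimitive (g w Hb Δx Abar θ h : ℝ) :
    HasDerivAt (pressurePrimitive g w Hb Δx Abar θ)
      (g / Δx * (θ * w * (h - Hb) + (1 - θ) * Abar)) h := by
  refine (((((hasDerivAt_id' h).sub_const Hb).pow 2).const_mul (θ * (w / 2))).add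
    ((hasDerivAt_id' h).const_mul ((1 - θ) * Abar)) |>.const_mul (g / Δx)).congr_deriv ?_
  ring

lemma momResLocal_eq (g w Hb Δx Δt C ε Abar Pbar Qbar θ Hiprev Hip1prev Qiprev Hi Hip1 Qi : ℝ) :
    momResLocal g w Hb Δx Δt C ε Abar Pbar Qbar θ Hiprev Hip1prev Qiprev Hi Hip1 Qi =
      (Qi - Qiprev) / Δt
        + (pressurePrimitive g w Hb Δx Abar θ Hip1 - pressurePrimitive g w Hb Δx Abar θ Hi)
        + g / C ^ 2 * ((θ * (w + Hiprev + Hip1prev - 2 * Hb) * sabs ε Qi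
            / (w / 2 * (Hiprev + Hip1prev - 2 * Hb)) ^ 2
          + (1 - θ) * Pbar * sabs ε Qbar / Abar ^ 2) * Qi) := by
  unfold momResLocal pressurePrimitive
  ring

theorem momResLocal_partials_general (g w Hb Δx Δt C ε Abar Pbar Qbar θ : ℝ)
    (hg : 0 < g) (hw : 0 < w) (hΔx : 0 < Δx) (hΔt : 0 < Δt)
    (hε : 0 < ε) (hAbar : 0 < Abar) (hPbar : 0 < Pbar)
    (hθ : θ ∈ Set.Icc (0 : ℝ) 1)
    (Hiprev Hip1prev Qiprev : ℝ) (hprev : 2 * Hb < Hiprev + Hip1prev)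
    (Hi Hip1 Qi : ℝ) :
    HasDerivAt
        (fun y => momResLocal g w Hb Δx Δt C ε Abar Pbar Qbar θ Hiprev Hip1prev Qiprev Hi y Qi)
        (g / Δx * (θ * w * (Hip1 - Hb) + (1 - θ) * Abar)) Hip1
    ∧ HasDerivAt
        (fun y => momResLocal g w Hb Δx Δt C ε Abar Pbar Qbar θ Hiprev Hip1prev Qiprev y Hip1 Qi)
        (-(g / Δx * (θ * w * (Hi - Hb) + (1 - θ) * Abar))) Hi
    ∧ (HasDerivAt
        (fun y => momResLocal g w Hb Δx Δt C ε Abar Pbar Qbar θ Hiprev Hip1prev Qiprev Hi Hip1 y)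
        (1 / Δt + g / C ^ 2 *
          (θ * (w + Hiprev + Hip1prev - 2 * Hb) * (Qi ^ 2 + sabs ε Qi ^ 2)
              / ((w / 2 * (Hiprev + Hip1prev - 2 * Hb)) ^ 2 * sabs ε Qi)
            + (1 - θ) * Pbar * sabs ε Qbar / Abar ^ 2)) Qi
      ∧ 0 < 1 / Δt + g / C ^ 2 *
          (θ * (w + Hiprev + Hip1prev - 2 * Hb) * (Qi ^ 2 + sabs ε Qi ^ 2)
              / ((w / 2 * (Hiprev + Hip1prev - 2 * Hb)) ^ 2 * sabs ε Qi)
            + (1 - θ) * Pbar * sabs ε Qbar / Abar ^ 2))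
    ∧ (Hb < Hip1 → 0 < g / Δx * (θ * w * (Hip1 - Hb) + (1 - θ) * Abar)) := by
  obtain ⟨hθ0, hθ1⟩ := hθ
  have hP : 0 ≤ θ * (w + Hiprev + Hip1prev - 2 * Hb) := mul_nonneg hθ0 (by linarith)
  have hPbar' : 0 ≤ (1 - θ) * Pbar := mul_nonneg (sub_nonneg.2 hθ1) hPbar.le
  have hs := sabs_pos hε Qi
  have hsbar := sabs_nonneg ε Qbar
  simp only [momResLocal_eq]
  refine ⟨?_, ?_, ⟨?_, by positivity⟩, fun hHip1 => ?_⟩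
  · exact (((hasDerivAt_pressurePrimitive ..).sub_const _).const_add _).add_const _
  · exact (((hasDerivAt_pressurePrimitive ..).const_sub _).const_add _).add_const _
  · exact ((((hasDerivAt_id' Qi).sub_const Qiprev).div_const Δt).add_const _).add
      ((hasDerivAt_sabs_friction hε ..).const_mul (g / C ^ 2))
  · have := convex_Ioi (0 : ℝ) (mul_pos hw (sub_pos.2 hHip1)) hAbar hθ0 (sub_nonneg.2 hθ1)
      (add_sub_cancel θ 1)
    simp only [smul_eq_mul, Set.mem_Ioi, ← mul_assoc] at this
    positivity

/-- Partial derivatives of the momentum residual `d_{i,j}` with respect to the current-time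
variables `H_{i+1}(t_j)`, `H_i(t_j)`, `Q_i(t_j)`:
(1) `∂d/∂H_{i+1} = (g/Δx)(θ w (H_{i+1} - H_b) + (1-θ)Ā)`;
(2) `∂d/∂H_i = -(g/Δx)(θ w (H_i - H_b) + (1-θ)Ā)`;
(3) `∂d/∂Q_i = 1/Δt + (g/C²)(θ P_prev (Q_i² + ⟨Q_i⟩²)/(A_prev² ⟨Q_i⟩) + (1-θ) P̄⟨Q̄⟩/Ā²) > 0`;
(4) if `H_{i+1} > H_b` then `∂d/∂H_{i+1} > 0`. -/
theorem momResLocal_partials (g w Hb Δx Δt C ε Abar Pbar Qbar θ : ℝ)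
    (hg : 0 < g) (hw : 0 < w) (hΔx : 0 < Δx) (hΔt : 0 < Δt) (hC : 0 < C)
    (hε : 0 < ε) (hAbar : 0 < Abar) (hPbar : 0 < Pbar)
    (hθ : θ ∈ Set.Icc (0 : ℝ) 1)
    (Hiprev Hip1prev Qiprev : ℝ) (hprev : 2 * Hb < Hiprev + Hip1prev)
    (Hi Hip1 Qi : ℝ) :
    HasDerivAt
        (fun y => momResLocal g w Hb Δx Δt C ε Abar Pbar Qbar θ Hiprev Hip1prev Qiprev Hi y Qi)
        (g / Δx * (θ * w * (Hip1 - Hb) + (1 - θ) * Abar)) Hip1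
    ∧ HasDerivAt
        (fun y => momResLocal g w Hb Δx Δt C ε Abar Pbar Qbar θ Hiprev Hip1prev Qiprev y Hip1 Qi)
        (-(g / Δx * (θ * w * (Hi - Hb) + (1 - θ) * Abar))) Hi
    ∧ (HasDerivAt
        (fun y => momResLocal g w Hb Δx Δt C ε Abar Pbar Qbar θ Hiprev Hip1prev Qiprev Hi Hip1 y)
        (1 / Δt + g / C ^ 2 *
          (θ * (w + Hiprev + Hip1prev - 2 * Hb) * (Qi ^ 2 + sabs ε Qi ^ 2)
              / ((w / 2 * (Hiprev + Hip1prev - 2 * Hb)) ^ 2 * sabs ε Qi)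
            + (1 - θ) * Pbar * sabs ε Qbar / Abar ^ 2)) Qi
      ∧ 0 < 1 / Δt + g / C ^ 2 *
          (θ * (w + Hiprev + Hip1prev - 2 * Hb) * (Qi ^ 2 + sabs ε Qi ^ 2)
              / ((w / 2 * (Hiprev + Hip1prev - 2 * Hb)) ^ 2 * sabs ε Qi)
            + (1 - θ) * Pbar * sabs ε Qbar / Abar ^ 2))
    ∧ (Hb < Hip1 → 0 < g / Δx * (θ * w * (Hip1 - Hb) + (1 - θ) * Abar)) :=
  momResLocal_partials_general g w Hb Δx Δt C ε Abar Pbar Qbar θ hg hw hΔx hΔt hε hAbar hPbar hθ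
    Hiprev Hip1prev Qiprev hprev Hi Hip1 Qi
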